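/- Let B be an extriangulated category with enough projectives, with P ⊆ B the subcategory of projective objects. Let U, V ⊆ B be full additive subcategories closed under direct summands and isomorphisms, and suppose U satisfies: (i) P ⊆ U, and (ii) U is extension-closed in B. Then (U,V) is a cotorsion pair on B if and only if E(U,V) = 0 and B = CoCone(V,U), i.e. every object B ∈ B admits a conflation B ↣ V' ↠ U' with V' ∈ V, U' ∈ U. -/

import Mathlib

namespace ExtriHearts

open CategoryTheory CategoryTheory.Limits Opposite

attribute [local instance] CategoryTheory.Limits.hasBinaryBiproducts_of_finite_biproducts

universe v u v₂ u₂

section IdealQuotient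

variable {D : Type u₂} [Category.{v₂} D] [Preadditive D]

/-- The subgroup of morphisms `X ⟶ Y` generated by those factoring through an object of `W`. -/
def wIdeal (W : Set D) (X Y : D) : AddSubgroup (X ⟶ Y) :=
  AddSubgroup.closure {f : X ⟶ Y | ∃ Z ∈ W, ∃ p : X ⟶ Z, ∃ q : Z ⟶ Y, f = p ≫ q}

/-- The hom relation on `D` identifying morphisms whose difference lies in the ideal
generated by morphisms factoring through an object of `W`.  (For an additively closed
subcategory `W` this is the usual relation "`f - g` factors through an object of `W`".) -/
def wRel (W : Set D) : HomRel D := fun {X Y} f g => f - g ∈ wIdeal W X Y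

lemma comp_left_mem_wIdeal (W : Set D) {X Y Z : D} (f : X ⟶ Y) {g : Y ⟶ Z}
    (hg : g ∈ wIdeal W Y Z) : f ≫ g ∈ wIdeal W X Z := by
  have hle : wIdeal W Y Z ≤ (wIdeal W X Z).comap (Preadditive.leftComp Z f) := by
    rw [wIdeal, AddSubgroup.closure_le]
    rintro g ⟨Z₀, hZ₀, p, q, rfl⟩
    exact AddSubgroup.subset_closure ⟨Z₀, hZ₀, f ≫ p, q, by
      simp [Preadditive.leftComp]⟩
  simpa [Preadditive.leftComp] using hle hg

lemma comp_right_mem_wIdeal (W : Set D) {X Y Z : D} {f : X ⟶ Y} (g : Y ⟶ Z)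
    (hf : f ∈ wIdeal W X Y) : f ≫ g ∈ wIdeal W X Z := by
  have hle : wIdeal W X Y ≤ (wIdeal W X Z).comap (Preadditive.rightComp X g) := by
    rw [wIdeal, AddSubgroup.closure_le]
    rintro f ⟨Z₀, hZ₀, p, q, rfl⟩
    exact AddSubgroup.subset_closure ⟨Z₀, hZ₀, p, q ≫ g, by
      simp [Preadditive.rightComp]⟩
  simpa [Preadditive.rightComp] using hle hf

instance wRel_congruence (W : Set D) : Congruence (wRel W) where
  equivalence :=
    { refl := fun f => by
        show f - f ∈ wIdeal W _ _
        simp only [sub_self]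
        exact zero_mem _
      symm := fun {f g} h => by
        have h' : f - g ∈ wIdeal W _ _ := h
        show g - f ∈ wIdeal W _ _
        simpa only [neg_sub] using neg_mem h'
      trans := fun {f g h} h₁ h₂ => by
        have h₁' : f - g ∈ wIdeal W _ _ := h₁
        have h₂' : g - h ∈ wIdeal W _ _ := h₂
        show f - h ∈ wIdeal W _ _
        simpa only [sub_add_sub_cancel] using add_mem h₁' h₂' }
  comp_left := fun {X Y Z} f {g g'} h => by
    have h' : g - g' ∈ wIdeal W _ _ := h
    show f ≫ g - f ≫ g' ∈ wIdeal W _ _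
    simpa only [← Preadditive.comp_sub] using comp_left_mem_wIdeal W f h'
  comp_right := fun {X Y Z} {f f'} g h => by
    have h' : f - f' ∈ wIdeal W _ _ := h
    show f ≫ g - f' ≫ g ∈ wIdeal W _ _
    simpa only [← Preadditive.sub_comp] using comp_right_mem_wIdeal W g h'

/-- The quotient of a preadditive category by (the ideal generated by) the morphisms factoring
through a class of objects `W`. -/
abbrev QuotCat (W : Set D) := CategoryTheory.Quotient (wRel W)

/-- The canonical quotient functor. -/
abbrev toQuot (W : Set D) : D ⥤ QuotCat W := Quotient.functor _

instance quotCatPreadditive (W : Set D) : Preadditive (QuotCat W) :=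
  Quotient.preadditive _ (fun X Y f₁ f₂ g₁ g₂ h₁ h₂ => by
    have h₁' : f₁ - f₂ ∈ wIdeal W X Y := h₁
    have h₂' : g₁ - g₂ ∈ wIdeal W X Y := h₂
    show f₁ + g₁ - (f₂ + g₂) ∈ wIdeal W X Y
    have heq : f₁ + g₁ - (f₂ + g₂) = f₁ - f₂ + (g₁ - g₂) := by abel
    rw [heq]
    exact add_mem h₁' h₂')

end IdealQuotient

section ExtCat

/-- The data of an additive `Ab`-valued bifunctor together with a realization predicate:
`realize δ x y` means that the 3-term sequence `A --x--> X --y--> C` realizes the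
`E`-extension `δ ∈ E(C,A)`, i.e. belongs to the equivalence class `s(δ)`. -/
structure PreExtStruct (B : Type u) [Category.{v} B] [Preadditive B] where
  /-- The additive bifunctor `E : Bᵒᵖ × B → Ab`. -/
  E : Bᵒᵖ ⥤ B ⥤ AddCommGrpCat.{v}

namespace PreExtStruct

variable {B : Type u} [Category.{v} B] [Preadditive B]

/-- The abelian group `E(C,A)` of `E`-extensions of `C` by `A`. -/
abbrev Ext (σ : PreExtStruct B) (C A : B) : AddCommGrpCat.{v} := (σ.E.obj (op C)).obj A

/-- `a_* δ`, the pushforward of an `E`-extension along `a : A ⟶ A'`. -/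
def push (σ : PreExtStruct B) {C A A' : B} (a : A ⟶ A') (δ : σ.Ext C A) : σ.Ext C A' :=
  (σ.E.obj (op C)).map a δ

/-- `c^* δ`, the pullback of an `E`-extension along `c : C' ⟶ C`. -/
def pull (σ : PreExtStruct B) {C' C A : B} (c : C' ⟶ C) (δ : σ.Ext C A) : σ.Ext C' A :=
  (σ.E.map c.op).app A δ

/-- The direct sum `δ ⊕ δ'` of two `E`-extensions, i.e. the element of
`E(C ⊞ C', A ⊞ A')` corresponding to `(δ, 0, 0, δ')`. -/
noncomputable def sumExt (σ : PreExtStruct B) [HasBinaryBiproducts B] {C C' A A' : B}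
    (δ : σ.Ext C A) (δ' : σ.Ext C' A') : σ.Ext (C ⊞ C') (A ⊞ A') :=
  σ.push biprod.inl (σ.pull biprod.fst δ) + σ.push biprod.inr (σ.pull biprod.snd δ')

end PreExtStruct

/-- An *extriangulated category* structure `(E, s)` on an additive category `B`, consisting of
an additive bifunctor `E : Bᵒᵖ × B → Ab` and an additive realization `s` of `E` (encoded by the
predicate `realize`), subject to the axioms (ET1), (ET2), (ET3), (ET3)ᵒᵖ, (ET4), (ET4)ᵒᵖ of
Nakaoka–Palu. -/
structure ExtStruct (B : Type u) [Category.{v} B] [Preadditive B] [HasFiniteBiproducts B]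
    extends PreExtStruct B where
  /-- (ET1) `E` is additive in the second variable. -/
  additive_fst : ∀ Cop : Bᵒᵖ, (E.obj Cop).Additive
  /-- (ET1) `E` is additive in the first variable. -/
  additive_snd : ∀ A : B, (E.flip.obj A).Additive
  /-- `realize δ x y` means the sequence `A --x--> X --y--> C` realizes `δ`, i.e. it belongs to
  the equivalence class `s(δ)`. -/
  realize : ∀ ⦃A C : B⦄, toPreExtStruct.Ext C A → ∀ ⦃X : B⦄, (A ⟶ X) → (X ⟶ C) → Prop
  /-- Every `E`-extension is realized by some sequence. -/
  realize_ex : ∀ ⦃A C : B⦄ (δ : toPreExtStruct.Ext C A),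
      ∃ (X : B) (x : A ⟶ X) (y : X ⟶ C), realize δ x y
  /-- `s(δ)` is closed under the equivalence of sequences. -/
  realize_iso : ∀ ⦃A C X X' : B⦄ (δ : toPreExtStruct.Ext C A) (x : A ⟶ X) (y : X ⟶ C)
      (b : X ≅ X'), realize δ x y → realize δ (x ≫ b.hom) (b.inv ≫ y)
  /-- Any two realizations of `δ` are equivalent sequences. -/
  realize_unique : ∀ ⦃A C X X' : B⦄ (δ : toPreExtStruct.Ext C A) (x : A ⟶ X) (y : X ⟶ C)
      (x' : A ⟶ X') (y' : X' ⟶ C), realize δ x y → realize δ x' y' →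
      ∃ b : X ≅ X', x ≫ b.hom = x' ∧ b.hom ≫ y' = y
  /-- (ET2)(∗) Any morphism of `E`-extensions is realized by a morphism of sequences. -/
  realize_map : ∀ ⦃A C A' C' X X' : B⦄ (δ : toPreExtStruct.Ext C A) (δ' : toPreExtStruct.Ext C' A')
      (x : A ⟶ X) (y : X ⟶ C) (x' : A' ⟶ X') (y' : X' ⟶ C') (a : A ⟶ A') (c : C ⟶ C'),
      realize δ x y → realize δ' x' y' →
      toPreExtStruct.push a δ = toPreExtStruct.pull c δ' →
      ∃ b : X ⟶ X', x ≫ b = a ≫ x' ∧ y ≫ c = b ≫ y'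
  /-- (ET2)(i) The split extension is realized by the split sequence. -/
  realize_zero : ∀ A C : B,
      realize (0 : toPreExtStruct.Ext C A) (biprod.inl : A ⟶ A ⊞ C) (biprod.snd : A ⊞ C ⟶ C)
  /-- (ET2)(ii) Realization is additive. -/
  realize_sum : ∀ ⦃A C A' C' X X' : B⦄ (δ : toPreExtStruct.Ext C A)
      (δ' : toPreExtStruct.Ext C' A') (x : A ⟶ X) (y : X ⟶ C) (x' : A' ⟶ X') (y' : X' ⟶ C'),
      realize δ x y → realize δ' x' y' →
      realize (toPreExtStruct.sumExt δ δ') (biprod.map x x') (biprod.map y y')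
  /-- (ET3) -/
  et3 : ∀ ⦃A C A' C' X X' : B⦄ (δ : toPreExtStruct.Ext C A) (δ' : toPreExtStruct.Ext C' A')
      (x : A ⟶ X) (y : X ⟶ C) (x' : A' ⟶ X') (y' : X' ⟶ C'),
      realize δ x y → realize δ' x' y' → ∀ (a : A ⟶ A') (b : X ⟶ X'), x ≫ b = a ≫ x' →
      ∃ c : C ⟶ C', toPreExtStruct.push a δ = toPreExtStruct.pull c δ' ∧ y ≫ c = b ≫ y'
  /-- (ET3)ᵒᵖ -/
  et3op : ∀ ⦃A C A' C' X X' : B⦄ (δ : toPreExtStruct.Ext C A) (δ' : toPreExtStruct.Ext C' A')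
      (x : A ⟶ X) (y : X ⟶ C) (x' : A' ⟶ X') (y' : X' ⟶ C'),
      realize δ x y → realize δ' x' y' → ∀ (b : X ⟶ X') (c : C ⟶ C'), y ≫ c = b ≫ y' →
      ∃ a : A ⟶ A', toPreExtStruct.push a δ = toPreExtStruct.pull c δ' ∧ x ≫ b = a ≫ x'
  /-- (ET4) -/
  et4 : ∀ ⦃A B₀ D C F : B⦄ (δ : toPreExtStruct.Ext D A) (f : A ⟶ B₀) (f' : B₀ ⟶ D)
      (δ' : toPreExtStruct.Ext F B₀) (g : B₀ ⟶ C) (g' : C ⟶ F),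
      realize δ f f' → realize δ' g g' →
      ∃ (E₀ : B) (d : D ⟶ E₀) (e : E₀ ⟶ F) (h' : C ⟶ E₀) (δ'' : toPreExtStruct.Ext E₀ A),
        g ≫ h' = f' ≫ d ∧ h' ≫ e = g' ∧
        realize δ'' (f ≫ g) h' ∧ realize (toPreExtStruct.push f' δ') d e ∧
        toPreExtStruct.pull d δ'' = δ ∧ toPreExtStruct.push f δ'' = toPreExtStruct.pull e δ'
  /-- (ET4)ᵒᵖ -/
  et4op : ∀ ⦃F C B₀ D A : B⦄ (δ' : toPreExtStruct.Ext B₀ F) (s : F ⟶ C) (t : C ⟶ B₀)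
      (δ : toPreExtStruct.Ext A D) (u : D ⟶ B₀) (v : B₀ ⟶ A),
      realize δ' s t → realize δ u v →
      ∃ (E₀ : B) (e : F ⟶ E₀) (d : E₀ ⟶ D) (m : E₀ ⟶ C) (δ'' : toPreExtStruct.Ext A E₀),
        m ≫ t = d ≫ u ∧ e ≫ m = s ∧
        realize δ'' m (t ≫ v) ∧ realize (toPreExtStruct.pull u δ') e d ∧
        toPreExtStruct.push d δ'' = δ ∧
        toPreExtStruct.pull v δ'' = toPreExtStruct.push e δ'

namespace ExtStruct

variable {B : Type u} [Category.{v} B] [Preadditive B] [HasFiniteBiproducts B] (σ : ExtStruct B)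

/-- A sequence `A --x--> X --y--> C` is a conflation if it realizes some `E`-extension. -/
def Conflation {A X C : B} (x : A ⟶ X) (y : X ⟶ C) : Prop :=
  ∃ δ : σ.Ext C A, σ.realize δ x y

/-- `Cone(D₁, D₂)`: objects `X` admitting a conflation `D₁ ↣ D₂ ↠ X`. -/
def Cone (D₁ D₂ : Set B) : Set B :=
  {X | ∃ (A Y : B) (f : A ⟶ Y) (g : Y ⟶ X), A ∈ D₁ ∧ Y ∈ D₂ ∧ σ.Conflation f g}

/-- `CoCone(D₁, D₂)`: objects `X` admitting a conflation `X ↣ D₁ ↠ D₂`. -/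
def CoCone (D₁ D₂ : Set B) : Set B :=
  {X | ∃ (Y C : B) (f : X ⟶ Y) (g : Y ⟶ C), Y ∈ D₁ ∧ C ∈ D₂ ∧ σ.Conflation f g}

/-- `D₁ ∗ D₂`: objects `X` admitting a conflation `D₁ ↣ X ↠ D₂`. -/
def star (D₁ D₂ : Set B) : Set B :=
  {X | ∃ (A C : B) (f : A ⟶ X) (g : X ⟶ C), A ∈ D₁ ∧ C ∈ D₂ ∧ σ.Conflation f g}

/-- `add(D₁ ∗ D₂)`: direct summands of objects of `D₁ ∗ D₂`. -/
def addStar (D₁ D₂ : Set B) : Set B :=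
  {X | ∃ Y ∈ σ.star D₁ D₂, ∃ (s : X ⟶ Y) (r : Y ⟶ X), s ≫ r = 𝟙 X}

/-- An object `P` is projective if `E(P, −) = 0`. -/
def IsProj (P : B) : Prop := ∀ (A : B) (δ : σ.Ext P A), δ = 0

/-- An object `I` is injective if `E(−, I) = 0`. -/
def IsInj (I : B) : Prop := ∀ (C : B) (δ : σ.Ext C I), δ = 0

/-- The class of projective objects. -/
def projs : Set B := {P | σ.IsProj P}

/-- `B` has enough projectives: every object admits a deflation from a projective. -/
def EnoughProj : Prop :=
  ∀ X : B, ∃ (P K : B) (i : K ⟶ P) (p : P ⟶ X), σ.IsProj P ∧ σ.Conflation i p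

/-- `B` has enough injectives: every object admits an inflation into an injective. -/
def EnoughInj : Prop :=
  ∀ X : B, ∃ (I C : B) (i : X ⟶ I) (p : I ⟶ C), σ.IsInj I ∧ σ.Conflation i p

end ExtStruct

/-- A full additive subcategory (given as a class of objects), closed under isomorphisms and
direct summands. -/
structure AddClosed {B : Type u} [Category.{v} B] [Preadditive B] [HasFiniteBiproducts B]
    (U : Set B) : Prop where
  zero_mem : ∀ Z : B, IsZero Z → Z ∈ U
  biprod_mem : ∀ X Y : B, X ∈ U → Y ∈ U → (X ⊞ Y) ∈ U
  summand_mem : ∀ X Y : B, Y ∈ U → ∀ (s : X ⟶ Y) (r : Y ⟶ X), s ≫ r = 𝟙 X → X ∈ U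

namespace ExtStruct

variable {B : Type u} [Category.{v} B] [Preadditive B] [HasFiniteBiproducts B] (σ : ExtStruct B)

/-- A (complete) cotorsion pair `(U, V)` on an extriangulated category. -/
structure IsCotorsionPair (U V : Set B) : Prop where
  addU : AddClosed U
  addV : AddClosed V
  ext_vanish : ∀ ⦃X : B⦄, X ∈ U → ∀ ⦃Y : B⦄, Y ∈ V → ∀ δ : σ.Ext X Y, δ = 0
  resolve : ∀ X : B, ∃ (V₀ U₀ : B) (f : V₀ ⟶ U₀) (g : U₀ ⟶ X),
      V₀ ∈ V ∧ U₀ ∈ U ∧ σ.Conflation f g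
  coresolve : ∀ X : B, ∃ (V₀ U₀ : B) (f : X ⟶ V₀) (g : V₀ ⟶ U₀),
      V₀ ∈ V ∧ U₀ ∈ U ∧ σ.Conflation f g

/-- A twin cotorsion pair `((S,T), (U,V))`. -/
structure IsTwinCotorsionPair (S T U V : Set B) : Prop where
  fst : σ.IsCotorsionPair S T
  snd : σ.IsCotorsionPair U V
  ext_SV : ∀ ⦃X : B⦄, X ∈ S → ∀ ⦃Y : B⦄, Y ∈ V → ∀ δ : σ.Ext X Y, δ = 0

section Twin

variable (S T U V : Set B)

/-- `B⁺ = Cone(V, W)` for the core `W = T ∩ U` of a twin cotorsion pair. -/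
def tPos : Set B := σ.Cone V (T ∩ U)

/-- `B⁻ = CoCone(W, S)` for the core `W = T ∩ U` of a twin cotorsion pair. -/
def tNeg : Set B := σ.CoCone (T ∩ U) S

/-- The class of objects of the heart `H = B⁺ ∩ B⁻` of a twin cotorsion pair. -/
def tHeartSet : Set B := σ.tPos T U V ∩ σ.tNeg S T U

/-- The heart `H/W` of a twin cotorsion pair, as a full subcategory of the quotient
category `B/W`. -/
abbrev THeart := ObjectProperty.FullSubcategory (fun X : QuotCat (T ∩ U : Set B) => X.as ∈ σ.tHeartSet S T U V)


/-- A *reflection sequence* for `B₀`: a conflation `B₀ ↣ Z ↠ S₀` with `Z ∈ B⁺`, `S₀ ∈ S`,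
such that `z^* : E(Z, V₀) → E(B₀, V₀)` is surjective for every `V₀ ∈ V`. -/
def IsReflectionSeq {B₀ Z S₀ : B} (z : B₀ ⟶ Z) (w : Z ⟶ S₀) : Prop :=
  Z ∈ σ.tPos T U V ∧ S₀ ∈ S ∧ σ.Conflation z w ∧
    ∀ ⦃V₀ : B⦄, V₀ ∈ V → Function.Surjective (fun δ : σ.Ext Z V₀ => σ.pull z δ)

/-- A *coreflection sequence* for `B₀`: a conflation `V₀ ↣ X ↠ B₀` with `X ∈ B⁻`, `V₀ ∈ V`,
such that `x_* : E(S₀, X) → E(S₀, B₀)` is surjective for every `S₀ ∈ S`. -/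
def IsCoreflectionSeq {V₀ X B₀ : B} (v : V₀ ⟶ X) (x : X ⟶ B₀) : Prop :=
  X ∈ σ.tNeg S T U ∧ V₀ ∈ V ∧ σ.Conflation v x ∧
    ∀ ⦃S₀ : B⦄, S₀ ∈ S → Function.Surjective (fun δ : σ.Ext S₀ X => σ.push x δ)

end Twin

section Single

variable (U V : Set B)

/-- `B⁺` for a single cotorsion pair `(U,V)`, with core `W = U ∩ V`. -/
def sPos : Set B := σ.Cone V (U ∩ V)

/-- `B⁻` for a single cotorsion pair `(U,V)`, with core `W = U ∩ V`. -/
def sNeg : Set B := σ.CoCone (U ∩ V) U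

/-- The class of objects of the heart of a single cotorsion pair. -/
def sHeartSet : Set B := σ.sPos U V ∩ σ.sNeg U V

/-- The heart `H/W` of a cotorsion pair `(U,V)`, a full subcategory of `B/W`, `W = U ∩ V`. -/
abbrev SHeart := ObjectProperty.FullSubcategory (fun X : QuotCat (U ∩ V : Set B) => X.as ∈ σ.sHeartSet U V)

/-- The inclusion of the heart into the quotient category `B/W`. -/
abbrev sHeartIncl : σ.SHeart U V ⥤ QuotCat (U ∩ V : Set B) := ObjectProperty.ι _

/-- The kernel `K = add(U ∗ V)` of a cotorsion pair. -/
def kernelSet : Set B := σ.addStar U V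

/-- The coheart `C = ⊥₁K` of a cotorsion pair. -/
def coheart : Set B := {X | ∀ ⦃K : B⦄, K ∈ σ.kernelSet U V → ∀ δ : σ.Ext X K, δ = 0}


/-- An object of the heart determined by an object of `B` lying in `B⁺ ∩ B⁻`. -/
def sHeartObj {X : B} (hX : X ∈ σ.sHeartSet U V) : σ.SHeart U V :=
  ⟨(toQuot (U ∩ V : Set B)).obj X, hX⟩

/-- The image in the heart of a morphism of `B` between objects of `B⁺ ∩ B⁻`. -/
def sHeartHom {X Y : B} (hX : X ∈ σ.sHeartSet U V) (hY : Y ∈ σ.sHeartSet U V) (f : X ⟶ Y) :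
    σ.sHeartObj U V hX ⟶ σ.sHeartObj U V hY :=
  ObjectProperty.homMk ((toQuot (U ∩ V : Set B)).map f)

end Single

end ExtStruct

end ExtCat

section More

variable {B : Type u} [Category.{v} B] [Preadditive B] [HasFiniteBiproducts B]

namespace ExtStruct

variable (σ : ExtStruct B)

/-- `Ω D₀ = CoCone(P, D₀)`, the syzygy class of a class of objects `D₀`. -/
def omegaSet (D₀ : Set B) : Set B := σ.CoCone σ.projs D₀

/-- A choice of iterated syzygies of `X`: `Z 0 = X` and for each `i` there is a conflation
`Z (i+1) ↣ P ↠ Z i` with `P` projective. -/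
def SyzygyChain (X : B) (Z : ℕ → B) : Prop :=
  Z 0 = X ∧ ∀ i : ℕ, ∃ (P : B) (f : Z (i + 1) ⟶ P) (g : P ⟶ Z i),
    σ.IsProj P ∧ σ.Conflation f g

/-- A choice of iterated cosyzygies of `Y`: `Z 0 = Y` and for each `i` there is a conflation
`Z i ↣ I ↠ Z (i+1)` with `I` injective. -/
def CosyzygyChain (Y : B) (Z : ℕ → B) : Prop :=
  Z 0 = Y ∧ ∀ i : ℕ, ∃ (I : B) (f : Z i ⟶ I) (g : I ⟶ Z (i + 1)),
    σ.IsInj I ∧ σ.Conflation f g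

/-- Vanishing of the higher extension group `E^{i+1}(X, Y) = E(X, Σ^i Y)`, expressed via
cosyzygy chains.  (`hExtVanish σ X Y 0` is the vanishing of `E(X,Y)` itself.) -/
def hExtVanish (X Y : B) (i : ℕ) : Prop :=
  ∀ Z : ℕ → B, σ.CosyzygyChain Y Z → ∀ δ : σ.Ext X (Z i), δ = 0

/-- `Σ^j D₀`: the class of `j`-th cosyzygies of objects of `D₀`. -/
def sigmaSet (j : ℕ) (D₀ : Set B) : Set B :=
  {X | ∃ Y ∈ D₀, ∃ Z : ℕ → B, σ.CosyzygyChain Y Z ∧ Z j = X}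

/-- An `n`-cluster tilting subcategory of an extriangulated category:
it is functorially finite, and `X ∈ M` iff `E^i(X, M) = 0` for `1 ≤ i ≤ n - 1`,
iff `E^i(M, X) = 0` for `1 ≤ i ≤ n - 1`. -/
structure IsNClusterTilting (n : ℕ) (M : Set B) : Prop where
  contravariantly_finite : ∀ X : B, ∃ M₀ ∈ M, ∃ f : M₀ ⟶ X,
      ∀ M₁ ∈ M, ∀ g : M₁ ⟶ X, ∃ h : M₁ ⟶ M₀, h ≫ f = g
  covariantly_finite : ∀ X : B, ∃ M₀ ∈ M, ∃ f : X ⟶ M₀,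
      ∀ M₁ ∈ M, ∀ g : X ⟶ M₁, ∃ h : M₀ ⟶ M₁, f ≫ h = g
  mem_iff_vanish_left : ∀ X : B,
      X ∈ M ↔ ∀ i : ℕ, i ≤ n - 2 → ∀ Y ∈ M, σ.hExtVanish X Y i
  mem_iff_vanish_right : ∀ X : B,
      X ∈ M ↔ ∀ i : ℕ, i ≤ n - 2 → ∀ Y ∈ M, σ.hExtVanish Y X i

/-- `mlev σ M k` is the subcategory `M_{k+1}` of the paper: `M_1 = M` and
`M_{ℓ} = Cone(M_{ℓ-1}, M)`. -/
def mlev (M : Set B) : ℕ → Set B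
  | 0 => M
  | (k + 1) => σ.Cone (mlev M k) M

end ExtStruct

section Reflectors

variable (W P N : Set B)

/-- The data of a reflection functor `σ⁺` onto the objects of `B⁺` (given by the class `P`),
i.e. a left adjoint of the inclusion of the full subcategory of `B/W` on `P` in the bijection
formulation: composing with the unit `B → σ⁺B` gives bijections
`(σ⁺X ⟶ Y) ≃ (X ⟶ Y)` for all `Y` lying in `P`. -/
structure ReflectorData where
  σp : QuotCat W ⥤ QuotCat W
  mem : ∀ X : QuotCat W, (σp.obj X).as ∈ P
  unit : 𝟭 (QuotCat W) ⟶ σp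
  bij : ∀ (X Y : QuotCat W), Y.as ∈ P →
      Function.Bijective (fun g : (σp.obj X ⟶ Y) => unit.app X ≫ g)

/-- The data of a coreflection functor `σ⁻` onto the objects of `B⁻` (given by the class `N`). -/
structure CoreflectorData where
  σm : QuotCat W ⥤ QuotCat W
  mem : ∀ X : QuotCat W, (σm.obj X).as ∈ N
  counit : σm ⟶ 𝟭 (QuotCat W)
  bij : ∀ (X Y : QuotCat W), X.as ∈ N →
      Function.Bijective (fun g : (X ⟶ σm.obj Y) => g ≫ counit.app Y)

end Reflectors

namespace ExtStruct

variable (σ : ExtStruct B)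

/-- The data of the cohomological functor `H = σ⁻ ∘ σ⁺ ∘ π : B → H` associated to a cotorsion
pair `(U, V)`: reflection and coreflection functors together with a functor `H` to the heart
which is isomorphic to `σ⁻ ∘ σ⁺ ∘ π` after composition with the inclusion of the heart. -/
structure HeartFunctorData (U V : Set B) where
  refl : ReflectorData (B := B) (U ∩ V) (σ.sPos U V)
  corefl : CoreflectorData (B := B) (U ∩ V) (σ.sNeg U V)
  H : B ⥤ σ.SHeart U V
  iso : (H ⋙ σ.sHeartIncl U V) ≅ (toQuot (U ∩ V : Set B) ⋙ refl.σp ⋙ corefl.σm)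

end ExtStruct

section Mod

variable (D : Type u₂) [Category.{v₂} D] [Preadditive D]

/-- A coherent (finitely presented) functor `Dᵒᵖ ⥤ Ab`: one admitting an exact presentation
`Hom(−,X) → Hom(−,Y) → F → 0`. -/
def IsCoherent (F : Dᵒᵖ ⥤ AddCommGrpCat.{v₂}) : Prop :=
  ∃ (X Y : D) (f : X ⟶ Y) (η : preadditiveYoneda.obj Y ⟶ F),
    (∀ A : D, Function.Surjective (η.app (op A))) ∧
    (∀ (A : D) (g : A ⟶ Y), η.app (op A) g = 0 ↔ ∃ h : A ⟶ X, h ≫ f = g)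

/-- `mod D`: the category of coherent functors `Dᵒᵖ ⥤ Ab`. -/
abbrev ModCat := ObjectProperty.FullSubcategory (fun F : Dᵒᵖ ⥤ AddCommGrpCat.{v₂} => IsCoherent D F)

end Mod

/-- The additive quotient `C/P` of the full subcategory of `B` on a class `C₀` of objects by
(the ideal of) morphisms factoring through objects satisfying `P₀`. -/
abbrev StableCat (C₀ P₀ : Set B) :=
  QuotCat (D := ObjectProperty.FullSubcategory (fun X : B => X ∈ C₀)) {Z | Z.obj ∈ P₀}

end More


/-!
Let `K ↣ P ↠ X` be a conflation with `P` projective and `K ↣ V' ↠ U'` one with `V' ∈ V`,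
`U' ∈ U`. Applying (ET4) to `K ↣ K ⊞ P ↣ V' ⊞ P`, where the first inflation is the shear
`(1, i)`, shows that the cone `E` of `(j, i) : K ↣ V' ⊞ P` sits in a conflation `P ↣ E ↠ U'`;
the same argument with the roles of the two conflations exchanged gives `V' ↣ E' ↠ X` for the
cone `E'` of `(i, j) : K ↣ P ⊞ V'`. Cones of an inflation are unique up to isomorphism, so
`E ≅ E'`, and `E ∈ U` by extension-closedness.
-/

lemma isIso_id_sub_of_comp_self_eq_zero {C : Type*} [Category C] [Preadditive C] {X : C}
    {n : X ⟶ X} (hn : n ≫ n = 0) : IsIso (𝟙 X - n) := by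
  have hnil : IsNilpotent (show End X from n) := ⟨2, by rw [pow_two, End.mul_def]; exact hn⟩
  exact (isUnit_iff_isIso (1 - show End X from n)).mp hnil.isUnit_one_sub

lemma isIso_of_isIso_comp_of_isIso_comp {C : Type*} [Category C] {X Y : C} (f : X ⟶ Y)
    (g : Y ⟶ X) [IsIso (f ≫ g)] [IsIso (g ≫ f)] : IsIso f :=
  have : Mono f := mono_of_mono f g
  have : IsSplitEpi f := IsSplitEpi.mk' ⟨inv (g ≫ f) ≫ g, by simp⟩
  isIso_of_mono_of_isSplitEpi f

namespace PreExtStruct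

variable {B : Type u} [Category.{v} B] [Preadditive B] (σ : PreExtStruct B)

@[simp]
lemma push_id {C A : B} (δ : σ.Ext C A) : σ.push (𝟙 A) δ = δ := by
  simp [push]

@[simp]
lemma pull_id {C A : B} (δ : σ.Ext C A) : σ.pull (𝟙 C) δ = δ := by
  simp [pull]

lemma pull_comp {C'' C' C A : B} (f : C'' ⟶ C') (g : C' ⟶ C) (δ : σ.Ext C A) :
    σ.pull (f ≫ g) δ = σ.pull f (σ.pull g δ) := by
  simp [pull]

end PreExtStruct

namespace ExtStruct

variable {B : Type u} [Category.{v} B] [Preadditive B] [HasFiniteBiproducts B] (σ : ExtStruct B)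

lemma pull_sub {C' C A : B} (f g : C' ⟶ C) (δ : σ.Ext C A) :
    σ.pull (f - g) δ = σ.pull f δ - σ.pull g δ := by
  have := σ.additive_snd A
  change ((σ.E.flip.obj A).map (f - g).op) δ = _
  rw [op_sub, Functor.map_sub]
  rfl

variable {σ}

lemma exists_lift_of_comp_eq_zero {A X C T : B} {δ : σ.Ext C A} {x : A ⟶ X} {y : X ⟶ C}
    (h : σ.realize δ x y) (t : T ⟶ X) (ht : t ≫ y = 0) : ∃ u : T ⟶ A, u ≫ x = t := by
  obtain ⟨u, -, hu⟩ := σ.et3op 0 δ biprod.inl biprod.snd x y (σ.realize_zero T X) h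
    (biprod.desc t (𝟙 X)) y (by ext <;> simp [ht])
  exact ⟨u, by simpa using hu.symm⟩

lemma exists_factor_of_pull_eq_zero {A X C T : B} {δ : σ.Ext C A} {x : A ⟶ X} {y : X ⟶ C}
    (h : σ.realize δ x y) (t : T ⟶ C) (ht : σ.pull t δ = 0) : ∃ s : T ⟶ X, s ≫ y = t := by
  obtain ⟨b, -, hb⟩ := σ.realize_map 0 δ biprod.inl biprod.snd x y (𝟙 A) t
    (σ.realize_zero A T) h (by simp [ht])
  exact ⟨biprod.inr ≫ b, by simp [← hb]⟩

lemma isIso_of_inflation_comp_eq_of_comp_deflation_eq {A X C : B} {δ : σ.Ext C A}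
    {x : A ⟶ X} {y : X ⟶ C} (h : σ.realize δ x y) {e : X ⟶ X} (hx : x ≫ e = x)
    (hy : e ≫ y = y) : IsIso e := by
  obtain ⟨u, hu⟩ := exists_lift_of_comp_eq_zero h (𝟙 X - e) (by simp [hy])
  have hnil : (u ≫ x) ≫ (u ≫ x) = 0 := by
    rw [Category.assoc, hu, Preadditive.comp_sub, Category.comp_id, hx, sub_self, comp_zero]
  simpa [hu] using isIso_id_sub_of_comp_self_eq_zero hnil

lemma isIso_of_pull_eq_of_deflation_comp_eq {A X C : B} {δ : σ.Ext C A} {x : A ⟶ X}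
    {y : X ⟶ C} (h : σ.realize δ x y) {g : C ⟶ C} (hg : σ.pull g δ = δ) (hy : y ≫ g = y) :
    IsIso g := by
  obtain ⟨s, hs⟩ := exists_factor_of_pull_eq_zero h (𝟙 C - g) (by simp [pull_sub, hg])
  have hnil : (s ≫ y) ≫ (s ≫ y) = 0 := by
    rw [Category.assoc, hs, Preadditive.comp_sub, Category.comp_id, hy, sub_self, comp_zero]
  simpa [hs] using isIso_id_sub_of_comp_self_eq_zero hnil

lemma realize_comp_iso {A X C C' : B} {δ : σ.Ext C A} {x : A ⟶ X} {y : X ⟶ C}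
    (h : σ.realize δ x y) (c : C ≅ C') : σ.realize (σ.pull c.inv δ) x (y ≫ c.hom) := by
  obtain ⟨X', x', y', h'⟩ := σ.realize_ex (σ.pull c.inv δ)
  obtain ⟨b, hxb, hyb⟩ := σ.realize_map _ δ x' y' x y (𝟙 A) c.inv h' h (by simp)
  obtain ⟨b', hxb', hyb'⟩ := σ.realize_map δ _ x y x' y' (𝟙 A) c.hom h h'
    (by simp [← PreExtStruct.pull_comp])
  rw [Category.id_comp] at hxb hxb'
  have hy : b ≫ y ≫ c.hom = y' := by rw [← Category.assoc, ← hyb]; simp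
  have : IsIso (b ≫ b') := isIso_of_inflation_comp_eq_of_comp_deflation_eq h'
    (by rw [reassoc_of% hxb, hxb']) (by rw [Category.assoc, ← hyb', hy])
  have : IsIso (b' ≫ b) := isIso_of_inflation_comp_eq_of_comp_deflation_eq h
    (by rw [reassoc_of% hxb', hxb]) (by rw [Category.assoc, ← hyb, ← reassoc_of% hyb']; simp)
  have : IsIso b := isIso_of_isIso_comp_of_isIso_comp b b'
  simpa [hxb, ← hy] using σ.realize_iso _ x' y' (asIso b) h'

lemma Conflation.exists_iso {A W E₀ E₁ : B} {x : A ⟶ W} {h₀ : W ⟶ E₀} {h₁ : W ⟶ E₁}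
    (hx₀ : σ.Conflation x h₀) (hx₁ : σ.Conflation x h₁) : ∃ c : E₀ ≅ E₁, h₀ ≫ c.hom = h₁ := by
  obtain ⟨δ, hδ⟩ := hx₀
  obtain ⟨ε, hε⟩ := hx₁
  obtain ⟨c, hδc, hc⟩ := σ.et3 δ ε x h₀ x h₁ hδ hε (𝟙 A) (𝟙 W) (by simp)
  obtain ⟨c', hεc', hc'⟩ := σ.et3 ε δ x h₁ x h₀ hε hδ (𝟙 A) (𝟙 W) (by simp)
  simp only [PreExtStruct.push_id, Category.id_comp] at hδc hεc' hc hc'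
  have : IsIso (c ≫ c') := isIso_of_pull_eq_of_deflation_comp_eq hδ
    (by rw [PreExtStruct.pull_comp, ← hεc', ← hδc]) (by simp [reassoc_of% hc, hc'])
  have : IsIso (c' ≫ c) := isIso_of_pull_eq_of_deflation_comp_eq hε
    (by rw [PreExtStruct.pull_comp, ← hδc, ← hεc']) (by simp [reassoc_of% hc', hc])
  have : IsIso c := isIso_of_isIso_comp_of_isIso_comp c c'
  exact ⟨asIso c, hc⟩

lemma Conflation.comp_iso {A X C C' : B} {x : A ⟶ X} {y : X ⟶ C} (h : σ.Conflation x y)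
    (c : C ≅ C') : σ.Conflation x (y ≫ c.hom) :=
  let ⟨_, hδ⟩ := h
  ⟨_, realize_comp_iso hδ c⟩

lemma Conflation.iso_comp_inv {A X X' C : B} {x : A ⟶ X} {y : X ⟶ C} (h : σ.Conflation x y)
    (b : X ≅ X') : σ.Conflation (x ≫ b.hom) (b.inv ≫ y) :=
  let ⟨δ, hδ⟩ := h
  ⟨δ, σ.realize_iso δ x y b hδ⟩

lemma realize_zero_id_zero {A Z : B} (hZ : IsZero Z) :
    σ.realize (0 : σ.Ext Z A) (𝟙 A) 0 := by
  simpa using σ.realize_iso 0 _ _ (isoBiprodZero hZ).symm (σ.realize_zero A Z)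

/-- The split conflation, sheared by the automorphism `(a, c) ↦ (a, c + a ≫ g)` of `A ⊞ C`. -/
lemma realize_zero_lift_id {A C : B} (g : A ⟶ C) :
    σ.realize (0 : σ.Ext C A) (biprod.lift (𝟙 A) g) (biprod.snd - biprod.fst ≫ g) := by
  let shear : A ⊞ C ≅ A ⊞ C :=
    { hom := biprod.lift biprod.fst (biprod.fst ≫ g + biprod.snd)
      inv := biprod.lift biprod.fst (biprod.snd - biprod.fst ≫ g) }
  convert σ.realize_iso 0 _ _ shear (σ.realize_zero A C) using 1 <;> ext <;> simp [shear]

lemma Conflation.exists_cone_biprodLift {K V U P : B} {j : K ⟶ V} {q : V ⟶ U}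
    (hjq : σ.Conflation j q) (i : K ⟶ P) :
    ∃ (E : B) (h : V ⊞ P ⟶ E) (d : P ⟶ E) (e : E ⟶ U),
      σ.Conflation (biprod.lift j i) h ∧ σ.Conflation d e := by
  obtain ⟨ρ, hρ⟩ := hjq
  have hsum := σ.realize_sum ρ 0 j q (𝟙 P) 0 hρ (realize_zero_id_zero (isZero_zero B))
  obtain ⟨E, d, e, h, ε, -, -, hcone, hde, -⟩ :=
    σ.et4 _ _ _ _ _ _ (realize_zero_lift_id i) hsum
  refine ⟨E, h, d, e ≫ (isoBiprodZero (isZero_zero B)).inv, ⟨ε, ?_⟩, ?_⟩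
  · convert hcone using 1
    ext <;> simp
  · exact Conflation.comp_iso ⟨_, hde⟩ (isoBiprodZero (isZero_zero B)).symm

end ExtStruct

/-- Proposition 4.1 / `approxi`. Assume `B` has enough projectives and let
`U, V ⊆ B` be full additive subcategories closed under direct summands and isomorphisms, with
`P ⊆ U` and `U` extension-closed.  Then `(U,V)` is a cotorsion pair if and only if
`E(U,V) = 0` and `B = CoCone(V,U)`, i.e. every object admits a conflation `X ↣ V' ↠ U'`
with `V' ∈ V`, `U' ∈ U`. -/
theorem statement_13 {B : Type u} [Category.{v} B] [Preadditive B] [HasFiniteBiproducts B]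
    (σ : ExtStruct B) (hproj : σ.EnoughProj) (U V : Set B)
    (hU : AddClosed U) (hV : AddClosed V)
    (hPU : σ.projs ⊆ U)
    (hUext : ∀ ⦃A X C : B⦄ (f : A ⟶ X) (g : X ⟶ C), σ.Conflation f g →
      A ∈ U → C ∈ U → X ∈ U) :
    σ.IsCotorsionPair U V ↔
      ((∀ ⦃X : B⦄, X ∈ U → ∀ ⦃Y : B⦄, Y ∈ V → ∀ δ : σ.Ext X Y, δ = 0) ∧
       ∀ X : B, ∃ (V₀ U₀ : B) (f : X ⟶ V₀) (g : V₀ ⟶ U₀),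
         V₀ ∈ V ∧ U₀ ∈ U ∧ σ.Conflation f g) := by
  refine ⟨fun h => ⟨h.ext_vanish, h.coresolve⟩, fun ⟨hUV, hcoresolve⟩ => ?_⟩
  refine ⟨hU, hV, hUV, fun X => ?_, hcoresolve⟩
  obtain ⟨P, K, i, p, hP, hip⟩ := hproj X
  obtain ⟨V', U', j, q, hV', hU', hjq⟩ := hcoresolve K
  obtain ⟨E, h, d, e, hcone, hPEU⟩ := hjq.exists_cone_biprodLift i
  obtain ⟨E', h', d', e', hcone', hVEX⟩ := hip.exists_cone_biprodLift j
  have hbraid : biprod.lift i j ≫ (biprod.braiding P V').hom = biprod.lift j i := by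
    ext <;> simp
  obtain ⟨c, -⟩ := (hbraid ▸ hcone'.iso_comp_inv (biprod.braiding P V')).exists_iso hcone
  exact ⟨V', E, d' ≫ c.hom, c.inv ≫ e', hV', hUext d e hPEU (hPU hP) hU',
    hVEX.iso_comp_inv c⟩

end ExtriHearts
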